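/- (Poisson equation for the localized pressure) Let (v,q,a,η) be smooth with ∂_t v_i = −a_{ki}∂_k q, a_{ji}∂_j v_i = 0, ∂_j a_{ji} = 0 (Piola identity), and let ψ = ψ(x₃) be a smooth cutoff. Then Δ(ψq) = ∂_j((δ_{jk} − a_{ji}a_{ki}) ∂_k(ψq)) + ∂_j(a_{ji} a_{ki} ∂_k ψ · q) + ψ (∂_t a_{ji}) ∂_j v_i + a_{ji} (∂_j ψ) a_{ki} ∂_k q. -/

import Mathlib

/-- Partial derivative in direction `j` of a scalar field on `ℝ³`. -/
noncomputable def pd (j : Fin 3) (f : (Fin 3 → ℝ) → ℝ) (x : Fin 3 → ℝ) : ℝ :=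
  fderiv ℝ f x (Pi.single j 1)

/-- The Levi-Civita permutation symbol on `{0,1,2}` (indices in `Fin 3`), `ε₀₁₂ = 1`. -/
noncomputable def levi (i j k : Fin 3) : ℝ :=
  (((j : ℕ) : ℝ) - ((i : ℕ) : ℝ)) * (((k : ℕ) : ℝ) - ((i : ℕ) : ℝ)) *
    (((k : ℕ) : ℝ) - ((j : ℕ) : ℝ)) / 2

section helpers

variable {F : Type*} [NormedAddCommGroup F] [NormedSpace ℝ F]

lemma slice_t {g : ℝ × (Fin 3 → ℝ) → F} (hg : Differentiable ℝ g) (t : ℝ) (x : Fin 3 → ℝ) :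
    HasDerivAt (fun s => g (s, x)) (fderiv ℝ g (t, x) (1, 0)) t := by
  have h2 : HasDerivAt (fun s : ℝ => (s, x)) ((1 : ℝ), (0 : Fin 3 → ℝ)) t :=
    (hasDerivAt_id t).prodMk (hasDerivAt_const t x)
  exact (hg (t, x)).hasFDerivAt.comp_hasDerivAt t h2

lemma slice_x {g : ℝ × (Fin 3 → ℝ) → F} (hg : Differentiable ℝ g) (t : ℝ) (x : Fin 3 → ℝ) :
    HasFDerivAt (fun y => g (t, y))
      ((fderiv ℝ g (t, x)).comp (((0 : (Fin 3 → ℝ) →L[ℝ] ℝ)).prod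
        (ContinuousLinearMap.id ℝ (Fin 3 → ℝ)))) x := by
  have h2 : HasFDerivAt (fun y : Fin 3 → ℝ => (t, y))
      (((0 : (Fin 3 → ℝ) →L[ℝ] ℝ)).prod (ContinuousLinearMap.id ℝ (Fin 3 → ℝ))) x :=
    (hasFDerivAt_const t x).prodMk (hasFDerivAt_id x)
  exact (hg (t, x)).hasFDerivAt.comp x h2

lemma pd_slice {g : ℝ × (Fin 3 → ℝ) → ℝ} (hg : Differentiable ℝ g) (t : ℝ) (x : Fin 3 → ℝ)
    (j : Fin 3) : pd j (fun y => g (t, y)) x = fderiv ℝ g (t, x) (0, Pi.single j 1) := by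
  rw [pd, (slice_x hg t x).fderiv]
  simp

lemma clairaut {g : ℝ × (Fin 3 → ℝ) → ℝ} (hg : ContDiff ℝ (⊤ : ℕ∞) g) (t : ℝ) (x : Fin 3 → ℝ)
    (j : Fin 3) :
    HasDerivAt (fun s => pd j (fun y => g (s, y)) x)
      (pd j (fun y => deriv (fun s => g (s, y)) t) x) t := by
  have hgd : Differentiable ℝ g := hg.differentiable (by simp)
  have hD : ContDiff ℝ (⊤ : ℕ∞) (fderiv ℝ g) := hg.fderiv_right (by simp)
  have hDd : Differentiable ℝ (fderiv ℝ g) := hD.differentiable (by simp)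
  have h1 : HasDerivAt (fun s => fderiv ℝ g (s, x)) (fderiv ℝ (fderiv ℝ g) (t, x) (1, 0)) t :=
    slice_t hDd t x
  have h2 : HasDerivAt (fun s => fderiv ℝ g (s, x) ((0 : ℝ), Pi.single j 1))
      (fderiv ℝ (fderiv ℝ g) (t, x) (1, 0) ((0 : ℝ), Pi.single j 1)) t := by
    simpa using h1.clm_apply (hasDerivAt_const t ((0 : ℝ), Pi.single j 1))
  have hsym : fderiv ℝ (fderiv ℝ g) (t, x) (1, 0) ((0 : ℝ), Pi.single j 1)
      = fderiv ℝ (fderiv ℝ g) (t, x) ((0 : ℝ), Pi.single j 1) (1, 0) :=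
    second_derivative_symmetric (fun y => (hgd y).hasFDerivAt) ((hDd (t, x)).hasFDerivAt) _ _
  have e1 : (fun s => pd j (fun y => g (s, y)) x)
      = fun s => fderiv ℝ g (s, x) ((0 : ℝ), Pi.single j 1) :=
    funext fun s => pd_slice hgd s x j
  have e2 : pd j (fun y => deriv (fun s => g (s, y)) t) x
      = fderiv ℝ (fderiv ℝ g) (t, x) ((0 : ℝ), Pi.single j 1) (1, 0) := by
    have e3 : (fun y => deriv (fun s => g (s, y)) t) = fun y => fderiv ℝ g (t, y) (1, 0) :=
      funext fun y => (slice_t hgd t y).deriv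
    rw [e3, pd]
    have h4 := slice_x hDd t x
    have h5 := h4.clm_apply (hasFDerivAt_const ((1 : ℝ), (0 : Fin 3 → ℝ)) x)
    rw [h5.fderiv]
    simp
  rw [e1, e2, ← hsym]
  exact h2

lemma pd_sum {ι : Type*} (s : Finset ι) (f : ι → (Fin 3 → ℝ) → ℝ) {x : Fin 3 → ℝ}
    (h : ∀ i ∈ s, DifferentiableAt ℝ (f i) x) (j : Fin 3) :
    pd j (fun y => ∑ i ∈ s, f i y) x = ∑ i ∈ s, pd j (f i) x := by
  rw [pd, fderiv_fun_sum h]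
  simp [pd]

lemma pd_mul {f g : (Fin 3 → ℝ) → ℝ} {x : Fin 3 → ℝ} (hf : DifferentiableAt ℝ f x)
    (hg : DifferentiableAt ℝ g x) (j : Fin 3) :
    pd j (fun y => f y * g y) x = pd j f x * g x + f x * pd j g x := by
  rw [pd, fderiv_fun_mul hf hg]
  simp [pd]
  ring

lemma pd_neg {f : (Fin 3 → ℝ) → ℝ} {x : Fin 3 → ℝ} (j : Fin 3) :
    pd j (fun y => -f y) x = -pd j f x := by
  rw [pd, fderiv_fun_neg]
  simp [pd]

lemma pd_sub {f g : (Fin 3 → ℝ) → ℝ} {x : Fin 3 → ℝ} (hf : DifferentiableAt ℝ f x)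
    (hg : DifferentiableAt ℝ g x) (j : Fin 3) :
    pd j (fun y => f y - g y) x = pd j f x - pd j g x := by
  rw [pd, fderiv_fun_sub hf hg]
  simp [pd]

lemma pd_add {f g : (Fin 3 → ℝ) → ℝ} {x : Fin 3 → ℝ} (hf : DifferentiableAt ℝ f x)
    (hg : DifferentiableAt ℝ g x) (j : Fin 3) :
    pd j (fun y => f y + g y) x = pd j f x + pd j g x := by
  rw [pd, fderiv_fun_add hf hg]
  simp [pd]

lemma pd_contDiff {f : (Fin 3 → ℝ) → ℝ} (hf : ContDiff ℝ (⊤ : ℕ∞) f) (j : Fin 3) :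
    ContDiff ℝ (⊤ : ℕ∞) (pd j f) :=
  (hf.fderiv_right (by simp)).clm_apply contDiff_const

end helpers

/-- **Poisson equation for the localized pressure.** Given smooth `(v,q,a,η)` with
`∂_t v_i = −a_{ki}∂_k q`, `a_{ji}∂_j v_i = 0`, the Piola identity `∂_j a_{ji} = 0`, and a
smooth cutoff `ψ = ψ(x₃)`, one has
`Δ(ψq) = ∂_j((δ_{jk} − a_{ji}a_{ki})∂_k(ψq)) + ∂_j(a_{ji}a_{ki}∂_kψ · q)
  + ψ(∂_t a_{ji})∂_j v_i + a_{ji}(∂_jψ)a_{ki}∂_k q`. -/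
theorem stmt13 (v : ℝ → (Fin 3 → ℝ) → Fin 3 → ℝ) (q : ℝ → (Fin 3 → ℝ) → ℝ)
    (a : ℝ → (Fin 3 → ℝ) → Matrix (Fin 3) (Fin 3) ℝ) (ψ : ℝ → ℝ)
    (hsmv : ContDiff ℝ (⊤ : ℕ∞) fun p : ℝ × (Fin 3 → ℝ) => (v p.1 p.2 : Fin 3 → ℝ))
    (hsmq : ContDiff ℝ (⊤ : ℕ∞) fun p : ℝ × (Fin 3 → ℝ) => q p.1 p.2)
    (hsma : ∀ i j : Fin 3, ContDiff ℝ (⊤ : ℕ∞) fun p : ℝ × (Fin 3 → ℝ) => a p.1 p.2 i j)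
    (hψ : ContDiff ℝ (⊤ : ℕ∞) ψ)
    (heuler : ∀ t x (i : Fin 3),
      deriv (fun s => v s x i) t = -∑ k : Fin 3, a t x k i * pd k (q t) x)
    (hdiv : ∀ t x, ∑ j : Fin 3, ∑ i : Fin 3, a t x j i * pd j (fun y => v t y i) x = 0)
    (hpiola : ∀ t x (i : Fin 3), ∑ j : Fin 3, pd j (fun y => a t y j i) x = 0) :
    ∀ t x,
      ∑ j : Fin 3, pd j (pd j (fun y => ψ (y 2) * q t y)) x =
        ∑ j : Fin 3, pd j (fun y => ∑ k : Fin 3,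
            ((if j = k then (1:ℝ) else 0) - ∑ i : Fin 3, a t y j i * a t y k i) *
              pd k (fun z => ψ (z 2) * q t z) y) x
        + ∑ j : Fin 3, pd j (fun y => ∑ k : Fin 3, ∑ i : Fin 3,
            a t y j i * a t y k i * pd k (fun z => ψ (z 2)) y * q t y) x
        + ψ (x 2) * ∑ j : Fin 3, ∑ i : Fin 3,
            deriv (fun s => a s x j i) t * pd j (fun y => v t y i) x
        + ∑ j : Fin 3, ∑ k : Fin 3, ∑ i : Fin 3,
            a t x j i * pd j (fun z => ψ (z 2)) x * a t x k i * pd k (q t) x := by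
  intro t x
  -- basic smoothness of slices
  have hQc : ContDiff ℝ (⊤ : ℕ∞) (q t) := hsmq.comp (contDiff_const.prodMk contDiff_id)
  have hΨc : ContDiff ℝ (⊤ : ℕ∞) (fun y : Fin 3 → ℝ => ψ (y 2)) :=
    hψ.comp (ContinuousLinearMap.proj (R := ℝ) (φ := fun _ : Fin 3 => ℝ) 2).contDiff
  have hAc : ∀ i j : Fin 3, ContDiff ℝ (⊤ : ℕ∞) (fun y => a t y i j) := fun i j =>
    (hsma i j).comp (contDiff_const.prodMk contDiff_id)
  have hPc : ContDiff ℝ (⊤ : ℕ∞) (fun y => ψ (y 2) * q t y) := hΨc.mul hQc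
  -- smoothness of x ↦ ∂ₜ v
  have hWc : ∀ i : Fin 3, ContDiff ℝ (⊤ : ℕ∞) (fun y => deriv (fun s => v s y i) t) := by
    intro i
    have e : (fun y => deriv (fun s => v s y i) t)
        = fun y => -∑ k : Fin 3, a t y k i * pd k (q t) y := funext fun y => heuler t y i
    rw [e]
    exact (ContDiff.sum fun k _ => (hAc k i).mul (pd_contDiff hQc k)).neg
  -- pointwise Leibniz for pd of the localized pressure
  have hpdP : ∀ (k : Fin 3) (y : Fin 3 → ℝ),
      pd k (fun z => ψ (z 2) * q t z) y
        = pd k (fun z => ψ (z 2)) y * q t y + ψ (y 2) * pd k (q t) y := fun k y =>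
    pd_mul (hΨc.differentiable (by simp) y) (hQc.differentiable (by simp) y) k
  -- Step 1: split off the Laplacian from the first RHS term
  have hT1 : ∀ j : Fin 3,
      pd j (fun y => ∑ k : Fin 3,
          ((if j = k then (1:ℝ) else 0) - ∑ i : Fin 3, a t y j i * a t y k i) *
            pd k (fun z => ψ (z 2) * q t z) y) x
        = pd j (pd j (fun y => ψ (y 2) * q t y)) x
          - pd j (fun y => ∑ k : Fin 3, (∑ i : Fin 3, a t y j i * a t y k i) *
              pd k (fun z => ψ (z 2) * q t z) y) x := by
    intro j
    have e : (fun y => ∑ k : Fin 3,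
          ((if j = k then (1:ℝ) else 0) - ∑ i : Fin 3, a t y j i * a t y k i) *
            pd k (fun z => ψ (z 2) * q t z) y)
        = fun y => pd j (fun z => ψ (z 2) * q t z) y
            - ∑ k : Fin 3, (∑ i : Fin 3, a t y j i * a t y k i) *
                pd k (fun z => ψ (z 2) * q t z) y := by
      funext y
      simp [sub_mul, Finset.sum_sub_distrib, ite_mul, Finset.sum_ite_eq]
    rw [e]
    exact pd_sub ((pd_contDiff hPc j).differentiable (by simp) x)
      ((ContDiff.sum fun k _ =>
        (ContDiff.sum fun i _ => (hAc j i).mul (hAc k i)).mul (pd_contDiff hPc k)).differentiable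
          (by simp) x) j
  rw [show ∑ j : Fin 3, pd j (fun y => ∑ k : Fin 3,
          ((if j = k then (1:ℝ) else 0) - ∑ i : Fin 3, a t y j i * a t y k i) *
            pd k (fun z => ψ (z 2) * q t z) y) x
      = ∑ j : Fin 3, pd j (pd j (fun y => ψ (y 2) * q t y)) x
        - ∑ j : Fin 3, pd j (fun y => ∑ k : Fin 3, (∑ i : Fin 3, a t y j i * a t y k i) *
            pd k (fun z => ψ (z 2) * q t z) y) x from by
    rw [← Finset.sum_sub_distrib]; exact Finset.sum_congr rfl fun j _ => hT1 j]
  -- it now suffices to identify the pure a-a divergence term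
  suffices key : ∑ j : Fin 3, pd j (fun y => ∑ k : Fin 3, (∑ i : Fin 3, a t y j i * a t y k i) *
        pd k (fun z => ψ (z 2) * q t z) y) x
      = ∑ j : Fin 3, pd j (fun y => ∑ k : Fin 3, ∑ i : Fin 3,
            a t y j i * a t y k i * pd k (fun z => ψ (z 2)) y * q t y) x
        + ψ (x 2) * ∑ j : Fin 3, ∑ i : Fin 3,
            deriv (fun s => a s x j i) t * pd j (fun y => v t y i) x
        + ∑ j : Fin 3, ∑ k : Fin 3, ∑ i : Fin 3,
            a t x j i * pd j (fun z => ψ (z 2)) x * a t x k i * pd k (q t) x by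
    rw [key]; ring
  -- Step 2: split each summand using the Leibniz rule and the Euler equation
  have hsplit : ∀ j : Fin 3,
      pd j (fun y => ∑ k : Fin 3, (∑ i : Fin 3, a t y j i * a t y k i) *
          pd k (fun z => ψ (z 2) * q t z) y) x
        = pd j (fun y => ∑ k : Fin 3, ∑ i : Fin 3,
              a t y j i * a t y k i * pd k (fun z => ψ (z 2)) y * q t y) x
          + pd j (fun y => -(ψ (y 2) * ∑ i : Fin 3,
              a t y j i * deriv (fun s => v s y i) t)) x := by
    intro j
    have e : (fun y => ∑ k : Fin 3, (∑ i : Fin 3, a t y j i * a t y k i) *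
          pd k (fun z => ψ (z 2) * q t z) y)
        = fun y => (∑ k : Fin 3, ∑ i : Fin 3,
              a t y j i * a t y k i * pd k (fun z => ψ (z 2)) y * q t y)
            + (-(ψ (y 2) * ∑ i : Fin 3, a t y j i * deriv (fun s => v s y i) t)) := by
      funext y
      simp only [hpdP, heuler]
      simp only [Fin.sum_univ_three]
      ring
    rw [e]
    exact pd_add
      ((ContDiff.sum fun k _ => ContDiff.sum fun i _ =>
        (((hAc j i).mul (hAc k i)).mul (pd_contDiff hΨc k)).mul hQc).differentiable (by simp) x)
      (((hΨc.mul (ContDiff.sum fun i _ => (hAc j i).mul (hWc i))).neg).differentiable (by simp) x) j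
  rw [show (∑ j : Fin 3, pd j (fun y => ∑ k : Fin 3, (∑ i : Fin 3, a t y j i * a t y k i) *
        pd k (fun z => ψ (z 2) * q t z) y) x)
      = (∑ j : Fin 3, pd j (fun y => ∑ k : Fin 3, ∑ i : Fin 3,
            a t y j i * a t y k i * pd k (fun z => ψ (z 2)) y * q t y) x)
        + ∑ j : Fin 3, pd j (fun y => -(ψ (y 2) * ∑ i : Fin 3,
            a t y j i * deriv (fun s => v s y i) t)) x from by
    rw [← Finset.sum_add_distrib]; exact Finset.sum_congr rfl fun j _ => hsplit j]
  -- it remains to identify the transported pressure-gradient divergence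
  suffices key2 : ∑ j : Fin 3, pd j (fun y => -(ψ (y 2) * ∑ i : Fin 3,
        a t y j i * deriv (fun s => v s y i) t)) x
      = ψ (x 2) * ∑ j : Fin 3, ∑ i : Fin 3,
            deriv (fun s => a s x j i) t * pd j (fun y => v t y i) x
        + ∑ j : Fin 3, ∑ k : Fin 3, ∑ i : Fin 3,
            a t x j i * pd j (fun z => ψ (z 2)) x * a t x k i * pd k (q t) x by
    rw [key2]; ring
  -- Step 3: expand the divergence of ψ a ∂ₜv
  have hH : ∀ j : Fin 3,
      pd j (fun y => -(ψ (y 2) * ∑ i : Fin 3, a t y j i * deriv (fun s => v s y i) t)) x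
        = -(pd j (fun z => ψ (z 2)) x * (∑ i : Fin 3, a t x j i * deriv (fun s => v s x i) t)
            + ψ (x 2) * ∑ i : Fin 3, (pd j (fun y => a t y j i) x * deriv (fun s => v s x i) t
                + a t x j i * pd j (fun y => deriv (fun s => v s y i) t) x)) := by
    intro j
    rw [pd_neg]
    rw [pd_mul (hΨc.differentiable (by simp) x)
      ((ContDiff.sum fun i _ => (hAc j i).mul (hWc i)).differentiable (by simp) x)]
    rw [pd_sum Finset.univ _ (fun i _ => (((hAc j i).mul (hWc i)).differentiable (by simp) x)) j]
    rw [Finset.sum_congr rfl fun i _ =>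
      pd_mul ((hAc j i).differentiable (by simp) x) ((hWc i).differentiable (by simp) x) j]
  -- time derivative of the divergence-free condition (uses Clairaut)
  have hder : ∀ j i : Fin 3, HasDerivAt (fun s => a s x j i * pd j (fun y => v s y i) x)
      (deriv (fun s => a s x j i) t * pd j (fun y => v t y i) x
        + a t x j i * pd j (fun y => deriv (fun s => v s y i) t) x) t := by
    intro j i
    have ha : HasDerivAt (fun s => a s x j i) (deriv (fun s => a s x j i) t) t := by
      have hd : DifferentiableAt ℝ (fun s => a s x j i) t :=
        ((hsma j i).comp (contDiff_id.prodMk contDiff_const)).differentiable (by simp) t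
      exact hd.hasDerivAt
    have hb : HasDerivAt (fun s => pd j (fun y => v s y i) x)
        (pd j (fun y => deriv (fun s => v s y i) t) x) t := by
      simpa using clairaut (g := fun p : ℝ × (Fin 3 → ℝ) => v p.1 p.2 i)
        (contDiff_pi.mp hsmv i) t x j
    exact ha.mul hb
  have hzero : HasDerivAt
      (fun s => ∑ j : Fin 3, ∑ i : Fin 3, a s x j i * pd j (fun y => v s y i) x)
      (∑ j : Fin 3, ∑ i : Fin 3, (deriv (fun s => a s x j i) t * pd j (fun y => v t y i) x
        + a t x j i * pd j (fun y => deriv (fun s => v s y i) t) x)) t :=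
    HasDerivAt.fun_sum fun j _ => HasDerivAt.fun_sum fun i _ => hder j i
  have hfn : (fun s => ∑ j : Fin 3, ∑ i : Fin 3, a s x j i * pd j (fun y => v s y i) x)
      = fun _ => (0:ℝ) := funext fun s => hdiv s x
  rw [hfn] at hzero
  have claim1 : ∑ j : Fin 3, ∑ i : Fin 3,
      (deriv (fun s => a s x j i) t * pd j (fun y => v t y i) x
        + a t x j i * pd j (fun y => deriv (fun s => v s y i) t) x) = 0 :=
    hzero.unique (hasDerivAt_const t 0)
  have hpio0 := hpiola t x 0
  have hpio1 := hpiola t x 1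
  have hpio2 := hpiola t x 2
  have heu0 := heuler t x 0
  have heu1 := heuler t x 1
  have heu2 := heuler t x 2
  simp only [hH]
  simp only [Fin.sum_univ_three] at claim1 hpio0 hpio1 hpio2 heu0 heu1 heu2 ⊢
  linear_combination (-(ψ (x 2))) * claim1
    + (-(ψ (x 2) * deriv (fun s => v s x 0) t)) * hpio0
    + (-(ψ (x 2) * deriv (fun s => v s x 1) t)) * hpio1
    + (-(ψ (x 2) * deriv (fun s => v s x 2) t)) * hpio2
    + (-(pd 0 (fun z => ψ (z 2)) x * a t x 0 0 + pd 1 (fun z => ψ (z 2)) x * a t x 1 0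
        + pd 2 (fun z => ψ (z 2)) x * a t x 2 0)) * heu0
    + (-(pd 0 (fun z => ψ (z 2)) x * a t x 0 1 + pd 1 (fun z => ψ (z 2)) x * a t x 1 1
        + pd 2 (fun z => ψ (z 2)) x * a t x 2 1)) * heu1
    + (-(pd 0 (fun z => ψ (z 2)) x * a t x 0 2 + pd 1 (fun z => ψ (z 2)) x * a t x 1 2
        + pd 2 (fun z => ψ (z 2)) x * a t x 2 2)) * heu2
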